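/- Let L, M, N ⊆ [m] with s := |L| + |M| + |N| satisfying 1 ≤ s, and let C′ be the image of the F_2-linear map (F_2^m)³ → F_2^{E} sending (α,β,γ) to the vector whose coordinate at (d₁,d₂,d₃) ∈ E is α·d₁ + (β+γ)·d₂ + β·d₃, where E = (F_2^m × F_2^m × F_2^m) \ (Δ_L × Δ_M × Δ_N). If s ≤ 3m − 2, then C′ is a minimal code; moreover, if s ≥ 3, then C′ is self-orthogonal. -/

import Mathlib

open Finset Polynomial
open scoped Classical

/-- `V m` is the vector space `F₂^m`. -/
abbrev V (m : ℕ) := Fin m → ZMod 2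

/-- Dot product `x·y = Σ_i x_i y_i` in `F₂`. -/
def dot {m : ℕ} (x y : V m) : ZMod 2 := ∑ i, x i * y i

/-- `Supp v = {i : v i ≠ 0}`. -/
def supp {m : ℕ} (v : V m) : Finset (Fin m) := Finset.univ.filter fun i => v i ≠ 0

/-- The simplicial complex `Δ_L = {v : Supp v ⊆ L}` generated by `L`. -/
def Δ {m : ℕ} (L : Finset (Fin m)) : Finset (V m) := Finset.univ.filter fun v => supp v ⊆ L

/-- Hamming weight of a vector. -/
def wtv {ι : Type} [Fintype ι] (c : ι → ZMod 2) : ℕ :=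
  (Finset.univ.filter fun i => c i ≠ 0).card

/-- The linear functional `x ↦ x·y`. -/
noncomputable def dotL {m : ℕ} (y : V m) : V m →ₗ[ZMod 2] ZMod 2 :=
  ∑ i, LinearMap.smulRight (LinearMap.proj i) (y i)

/-- The linear map `(α,β,γ) ↦ ((d₁,d₂,d₃) ↦ α·d₁ + (β+γ)·d₂ + β·d₃)` whose range is the
binary code `C(D₁,D₂,D₃)`. -/
noncomputable def codeMap {m : ℕ} (D₁ D₂ D₃ : Finset (V m)) :
    (V m × V m × V m) →ₗ[ZMod 2]
      (({x // x ∈ D₁} × {x // x ∈ D₂} × {x // x ∈ D₃}) → ZMod 2) :=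
  LinearMap.pi fun d =>
    (dotL d.1.1).comp (LinearMap.fst (ZMod 2) (V m) (V m × V m))
    + (dotL d.2.1.1).comp
        (((LinearMap.fst (ZMod 2) (V m) (V m)).comp (LinearMap.snd (ZMod 2) (V m) (V m × V m)))
          + ((LinearMap.snd (ZMod 2) (V m) (V m)).comp (LinearMap.snd (ZMod 2) (V m) (V m × V m))))
    + (dotL d.2.2.1).comp
        ((LinearMap.fst (ZMod 2) (V m) (V m)).comp (LinearMap.snd (ZMod 2) (V m) (V m × V m)))

lemma codeMap_apply {m : ℕ} (D₁ D₂ D₃ : Finset (V m)) (α β γ : V m)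
    (d : {x // x ∈ D₁} × {x // x ∈ D₂} × {x // x ∈ D₃}) :
    codeMap D₁ D₂ D₃ (α, β, γ) d = dot α d.1.1 + dot (β + γ) d.2.1.1 + dot β d.2.2.1 := by
  simp [codeMap, dotL, dot, LinearMap.smulRight, mul_comm]

/-- The linear map `(α,β,γ) ↦ ((d₁,d₂,d₃) ↦ α·d₁ + (β+γ)·d₂ + β·d₃)` on an arbitrary
index set `E ⊆ F₂^m × F₂^m × F₂^m` of coordinates. -/
noncomputable def codeMapE {m : ℕ} (E : Finset (V m × V m × V m)) :
    (V m × V m × V m) →ₗ[ZMod 2] ({x // x ∈ E} → ZMod 2) :=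
  LinearMap.pi fun d =>
    (dotL d.1.1).comp (LinearMap.fst (ZMod 2) (V m) (V m × V m))
    + (dotL d.1.2.1).comp
        (((LinearMap.fst (ZMod 2) (V m) (V m)).comp (LinearMap.snd (ZMod 2) (V m) (V m × V m)))
          + ((LinearMap.snd (ZMod 2) (V m) (V m)).comp (LinearMap.snd (ZMod 2) (V m) (V m × V m))))
    + (dotL d.1.2.2).comp
        ((LinearMap.fst (ZMod 2) (V m) (V m)).comp (LinearMap.snd (ZMod 2) (V m) (V m × V m)))

/-- A binary linear code (given as a set of codewords) is minimal if the support of a nonzero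
codeword never strictly contains the support of another nonzero codeword. -/
def IsMinimalCode {ι : Type} (C : Set (ι → ZMod 2)) : Prop :=
  ∀ u ∈ C, u ≠ 0 → ∀ v ∈ C, v ≠ 0 → Function.support v ⊆ Function.support u → v = u

/-- A binary code is self-orthogonal if any two codewords are orthogonal. -/
def IsSelfOrthogonal {ι : Type} [Fintype ι] (C : Set (ι → ZMod 2)) : Prop :=
  ∀ c ∈ C, ∀ c' ∈ C, ∑ i, c i * c' i = 0

/-!
The codeword of `(α, β, γ)` is the restriction to `E` of a linear functional on
`W = (F₂^m)³`, and `Eᶜ = Δ_L × Δ_M × Δ_N` is a subspace with `2^s` elements.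

Minimality: if `f ≠ g` are functionals with `g ≠ 0` on `E` and `supp g|_E ⊆ supp f|_E`, then
`{g = 1, f = 0}` is a nonempty fiber of `(g, f) : W → F₂²`, so it has at least `|W| / 4 = 2^(3m-2)`
elements; but it lies in `Eᶜ \ {0}`, which has fewer than `2^s`.

Self-orthogonality: on any `F₂`-space `V`, `∑_{x ∈ V} f x * g x` counts a fiber of `(f, g)`,
a coset of a subspace of codimension at most `2`, so it is even as soon as `|V| ≥ 8`.
Apply this to `V = W` and to `V = Eᶜ` and subtract.
-/

open Module LinearMap

lemma finrank_le_finrank_ker_add_two {K W : Type*} [Field K] [AddCommGroup W] [Module K W]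
    [FiniteDimensional K W] (φ : W →ₗ[K] K × K) :
    finrank K W ≤ finrank K (ker φ) + 2 := by
  have h := finrank_range_add_finrank_ker φ
  have : finrank K (range φ) ≤ 2 := by
    simpa using Submodule.finrank_le (range φ)
  omega

lemma one_zero_mem_range_prod {W : Type*} [AddCommGroup W] [Module (ZMod 2) W]
    {f g : W →ₗ[ZMod 2] ZMod 2} {y z : W} (hgy : g y ≠ 0)
    (hfy : f y ≠ 0) (hz : g z ≠ f z) : ((1, 0) : ZMod 2 × ZMod 2) ∈ Set.range (g.prod f) := by
  have key : ∀ a b c d : ZMod 2, a ≠ 0 → b ≠ 0 → c ≠ d →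
      c = 1 ∧ d = 0 ∨ a + c = 1 ∧ b + d = 0 := by
    decide
  rcases key _ _ _ _ hgy hfy hz with h | h
  · exact ⟨z, by simpa using h⟩
  · exact ⟨y + z, by simpa using h⟩

section FiniteBinarySpace

variable {W : Type*} [AddCommGroup W] [Module (ZMod 2) W] [Fintype W]

lemma card_fiber_eq_two_pow_finrank_ker {W' : Type*} [AddCommGroup W'] [Module (ZMod 2) W']
    [DecidableEq W'] (φ : W →ₗ[ZMod 2] W') {c : W'} (hc : c ∈ Set.range φ) :
    #{x | φ x = c} = 2 ^ finrank (ZMod 2) (ker φ) := by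
  have hker := Module.card_eq_pow_finrank (K := ZMod 2) (V := ker φ)
  rw [ZMod.card, Fintype.card_subtype] at hker
  rw [AddMonoidHom.card_fiber_eq_of_mem_range φ hc ⟨0, map_zero φ⟩, ← hker]
  simp only [mem_ker]

lemma card_le_four_mul_card_fiber (φ : W →ₗ[ZMod 2] ZMod 2 × ZMod 2) {c : ZMod 2 × ZMod 2}
    (hc : c ∈ Set.range φ) : Fintype.card W ≤ 4 * #{x | φ x = c} := by
  rw [card_fiber_eq_two_pow_finrank_ker φ hc, Module.card_eq_pow_finrank (K := ZMod 2), ZMod.card]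
  calc 2 ^ finrank (ZMod 2) W ≤ 2 ^ (finrank (ZMod 2) (ker φ) + 2) :=
        Nat.pow_le_pow_right two_pos (finrank_le_finrank_ker_add_two φ)
    _ = 4 * 2 ^ finrank (ZMod 2) (ker φ) := by ring

lemma sum_mul_eq_card_filter {α : Type*} [Fintype α] (f g : α → ZMod 2) :
    ∑ x, f x * g x = (#{x | (f x, g x) = (1, 1)} : ZMod 2) := by
  rw [natCast_card_filter]
  refine sum_congr rfl fun x _ => ?_
  generalize f x = a; generalize g x = b
  revert a b; decide

theorem sum_mul_eq_zero_of_card (hW : 8 ≤ Fintype.card W) (f g : W →ₗ[ZMod 2] ZMod 2) :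
    ∑ x, f x * g x = 0 := by
  rw [sum_mul_eq_card_filter]
  by_cases hc : ((1, 1) : ZMod 2 × ZMod 2) ∈ Set.range (f.prod g)
  · have hrank : 3 ≤ finrank (ZMod 2) W := by
      rw [Module.card_eq_pow_finrank (K := ZMod 2), ZMod.card] at hW
      by_contra! h
      interval_cases h : finrank (ZMod 2) W <;> simp at hW
    have hker := finrank_le_finrank_ker_add_two (f.prod g)
    have := card_fiber_eq_two_pow_finrank_ker (f.prod g) hc
    simp only [LinearMap.prod_apply, Function.prod] at this
    rw [this, ZMod.natCast_eq_zero_iff_even]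
    exact (Nat.even_pow' (by omega)).2 even_two
  · have hempty : #{x | (f x, g x) = (1, 1)} = 0 :=
      card_eq_zero.2 (filter_eq_empty_iff.2 fun x _ hx => hc ⟨x, hx⟩)
    rw [hempty, Nat.cast_zero]

theorem restrict_eq_of_support_subset [DecidableEq W] {E : Finset W} (h0 : 0 ∉ E)
    (hcard : 4 * #Eᶜ ≤ Fintype.card W) {f g : W →ₗ[ZMod 2] ZMod 2}
    (hg : (fun x : E => g x) ≠ 0)
    (hsupp : Function.support (fun x : E => g x) ⊆ Function.support (fun x : E => f x)) :
    (fun x : E => g x) = fun x : E => f x := by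
  by_contra hne
  obtain ⟨y, hy⟩ := Function.ne_iff.1 hg
  obtain ⟨z, hz⟩ := Function.ne_iff.1 hne
  have hc := one_zero_mem_range_prod hy (hsupp hy) hz
  have hsub : ({x | (g.prod f) x = (1, 0)} : Finset W) ⊆ Eᶜ.erase 0 := by
    intro x hx
    simp only [mem_filter, mem_univ, true_and, LinearMap.prod_apply, Function.prod,
      Prod.mk.injEq] at hx
    refine mem_erase.2 ⟨fun h => by simp [h] at hx, mem_compl.2 fun hxE => ?_⟩
    exact hsupp (show (⟨x, hxE⟩ : E) ∈ Function.support _ by simp [hx.1]) hx.2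
  have hfiber := card_le_four_mul_card_fiber (g.prod f) hc
  have hsubcard := card_le_card hsub
  rw [card_erase_of_mem (mem_compl.2 h0)] at hsubcard
  have : 0 < #Eᶜ := card_pos.2 ⟨0, mem_compl.2 h0⟩
  omega

theorem sum_restrict_mul_eq_zero [DecidableEq W] {B : Submodule (ZMod 2) W} {E : Finset W}
    (hE : ∀ x, x ∈ E ↔ x ∉ B) (hB : 8 ≤ #Eᶜ) (f g : W →ₗ[ZMod 2] ZMod 2) :
    ∑ x : E, f x * g x = 0 := by
  have hBc : ∀ x, x ∈ Eᶜ ↔ x ∈ B := by simp [hE]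
  have hsumB : ∑ x ∈ Eᶜ, f x * g x = 0 := by
    rw [sum_subtype _ hBc]
    refine sum_mul_eq_zero_of_card ?_ (f.comp B.subtype) (g.comp B.subtype)
    rwa [Fintype.card_of_subtype _ hBc]
  have hsum := sum_add_sum_compl E fun x => f x * g x
  rw [hsumB, add_zero, sum_mul_eq_zero_of_card (hB.trans (card_le_univ _))] at hsum
  rwa [sum_coe_sort E fun x => f x * g x]

end FiniteBinarySpace

section BoxComplementCode

variable {m : ℕ}

noncomputable def codeFunctional (p : V m × V m × V m) :
    (V m × V m × V m) →ₗ[ZMod 2] ZMod 2 :=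
  (dotL p.1).comp (fst _ _ _) + (dotL (p.2.1 + p.2.2)).comp ((fst _ _ _).comp (snd _ _ _))
    + (dotL p.2.1).comp ((snd _ _ _).comp (snd _ _ _))

lemma codeMapE_eq_restrict_codeFunctional (E : Finset (V m × V m × V m))
    (p : V m × V m × V m) : codeMapE E p = fun d : E => codeFunctional p d := by
  funext d
  simp [codeMapE, codeFunctional, dotL, mul_comm]

def deltaSubmodule (L : Finset (Fin m)) : Submodule (ZMod 2) (V m) :=
  Submodule.pi (↑L)ᶜ fun _ => ⊥

lemma mem_deltaSubmodule_iff {L : Finset (Fin m)} {v : V m} : v ∈ deltaSubmodule L ↔ v ∈ Δ L := by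
  simp only [deltaSubmodule, Submodule.mem_pi, Submodule.mem_bot, Δ, supp, mem_filter, mem_univ,
    true_and, subset_iff, Set.mem_compl_iff, mem_coe]
  exact forall_congr' fun _ => not_imp_comm

lemma card_delta (L : Finset (Fin m)) : #(Δ L) = 2 ^ #L := by
  have : Δ L = Fintype.piFinset fun i => if i ∈ L then univ else {0} := by
    ext v
    simp only [Δ, supp, mem_filter, mem_univ, true_and, subset_iff, Fintype.mem_piFinset]
    refine forall_congr' fun i => ?_
    split_ifs with h <;> simp [h]
  rw [this, Fintype.card_piFinset]
  simp [apply_ite card]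

end BoxComplementCode

theorem stmt18_general (m : ℕ) (L M N : Finset (Fin m)) :
    (L.card + M.card + N.card + 2 ≤ 3 * m →
      IsMinimalCode (SetLike.coe (LinearMap.range (codeMapE (Δ L ×ˢ Δ M ×ˢ Δ N)ᶜ)))) ∧
    (3 ≤ L.card + M.card + N.card →
      IsSelfOrthogonal (SetLike.coe (LinearMap.range (codeMapE (Δ L ×ˢ Δ M ×ˢ Δ N)ᶜ)))) := by
  set E := (Δ L ×ˢ Δ M ×ˢ Δ N)ᶜ
  have hcard : #Eᶜ = 2 ^ (#L + #M + #N) := by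
    rw [compl_compl, card_product, card_product, card_delta, card_delta, card_delta]; ring
  have hcardW : Fintype.card (V m × V m × V m) = 2 ^ (3 * m) := by
    simp [Fintype.card_prod]; ring
  have hE : ∀ x, x ∈ E ↔
      x ∉ (deltaSubmodule L).prod ((deltaSubmodule M).prod (deltaSubmodule N)) := by
    simp [E, Submodule.mem_prod, mem_deltaSubmodule_iff]
  refine ⟨fun hs u hu _ v hv hv0 hsupp => ?_, fun hs c hc c' hc' => ?_⟩
  · obtain ⟨p, rfl⟩ := hu
    obtain ⟨q, rfl⟩ := hv
    simp only [codeMapE_eq_restrict_codeFunctional] at hv0 hsupp ⊢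
    refine restrict_eq_of_support_subset (fun h => (hE 0).1 h (zero_mem _)) ?_ hv0 hsupp
    rw [hcard, hcardW]
    calc 4 * 2 ^ (#L + #M + #N) = 2 ^ (#L + #M + #N + 2) := by ring
      _ ≤ 2 ^ (3 * m) := Nat.pow_le_pow_right two_pos hs
  · obtain ⟨p, rfl⟩ := hc
    obtain ⟨q, rfl⟩ := hc'
    simp only [codeMapE_eq_restrict_codeFunctional]
    refine sum_restrict_mul_eq_zero hE ?_ _ _
    rw [hcard]
    exact Nat.pow_le_pow_right two_pos hs

/-- Theorem 4.2, row 9: for `E = (F₂^m)³ \ (Δ_L × Δ_M × Δ_N)` and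
`s = |L|+|M|+|N| ≥ 1`, the corresponding code is minimal whenever `s ≤ 3m − 2` and
self-orthogonal whenever `s ≥ 3`. -/
theorem stmt18 (m : ℕ) (hm : 1 ≤ m) (L M N : Finset (Fin m))
    (hs : 1 ≤ L.card + M.card + N.card) :
    (L.card + M.card + N.card + 2 ≤ 3 * m →
      IsMinimalCode (SetLike.coe (LinearMap.range (codeMapE (Δ L ×ˢ Δ M ×ˢ Δ N)ᶜ)))) ∧
    (3 ≤ L.card + M.card + N.card →
      IsSelfOrthogonal (SetLike.coe (LinearMap.range (codeMapE (Δ L ×ˢ Δ M ×ˢ Δ N)ᶜ)))) :=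
  stmt18_general m L M N
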